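/- arXiv:1909.10016 — 2 statements merged into one kernel-verified Lean document; each statement's English description precedes it below -/
import Mathlib

section
/- Let R ≥ 1, let ε be a real with 0 < ε < 1, let n = ⌈2R⌉ + 1, and consider items e₁, …, eₙ₋₁ with s(eᵢ) = i/n + ε/n². Then Σ_{i=1}^{n−1} s(eᵢ) > R, and for every nonempty subset B ⊆ {e₁,…,eₙ₋₁} with s(B) ≤ 1, one has s(B) ≤ 1 − (1−ε)/n. -/
/-!
Write `s(i) = i/n + δ` with `δ = ε/n²`. All items together have size `(n-1)/2 + (n-1)δ`, which
exceeds `R` because `n - 1 = ⌈2R⌉`. For a subset `B`, `s(B) = (∑ B)/n + |B|δ`; if `s(B) ≤ 1` the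
integer `∑ B` is below `n`, hence at most `n - 1`, and `|B|δ < nδ = ε/n`.
-/

open Finset

lemma sum_Icc_one_natCast (m : ℕ) : ∑ i ∈ Icc 1 m, (i : ℝ) = m * (m + 1) / 2 := by
  induction m with
  | zero => simp
  | succ m ih =>
    rw [sum_Icc_succ_top (by omega), ih]
    push_cast
    ring

lemma sum_div_add_eq (n : ℕ) (δ : ℝ) (B : Finset ℕ) :
    ∑ i ∈ B, ((i : ℝ) / n + δ) = ((∑ i ∈ B, i : ℕ) : ℝ) / n + #B * δ := by
  simp [sum_add_distrib, sum_div]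

lemma sum_Icc_one_div_succ_add (m : ℕ) (δ : ℝ) :
    ∑ i ∈ Icc 1 m, ((i : ℝ) / (m + 1 : ℕ) + δ) = m / 2 + m * δ := by
  rw [sum_add_distrib, ← sum_div, sum_Icc_one_natCast, sum_const, Nat.card_Icc, nsmul_eq_mul]
  push_cast
  field_simp

lemma sum_lt_of_sum_div_add_le_one {n : ℕ} (hn : 0 < n) {δ : ℝ} (hδ : 0 < δ) {B : Finset ℕ}
    (h : ∑ i ∈ B, ((i : ℝ) / n + δ) ≤ 1) : ∑ i ∈ B, i < n := by
  rcases B.eq_empty_or_nonempty with rfl | hB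
  · simpa using hn
  have hcard : (1 : ℝ) ≤ #B := by exact_mod_cast hB.card_pos
  rw [sum_div_add_eq] at h
  have hlt : ((∑ i ∈ B, i : ℕ) : ℝ) / n < 1 := by nlinarith
  exact_mod_cast (div_lt_one (by positivity)).1 hlt

lemma sum_div_add_le_of_le_one {n : ℕ} (hn : 0 < n) {δ : ℝ} (hδ : 0 < δ) {B : Finset ℕ}
    (h : ∑ i ∈ B, ((i : ℝ) / n + δ) ≤ 1) :
    ∑ i ∈ B, ((i : ℝ) / n + δ) ≤ (n - 1) / n + #B * δ := by
  have hsum : ((∑ i ∈ B, i : ℕ) : ℝ) ≤ n - 1 := by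
    have := sum_lt_of_sum_div_add_le_one hn hδ h
    have : ((∑ i ∈ B, i : ℕ) : ℝ) + 1 ≤ n := by exact_mod_cast this
    linarith
  rw [sum_div_add_eq]
  gcongr

theorem stmt_14_general (R ε : ℝ) (hR : 1 ≤ R) (hε0 : 0 < ε)
    (n : ℕ) (hn : n = ⌈2 * R⌉₊ + 1) :
    (∑ i ∈ Finset.Icc 1 (n - 1), ((i : ℝ) / n + ε / (n : ℝ) ^ 2)) > R ∧
    ∀ B ⊆ Finset.Icc 1 (n - 1), B.Nonempty →
      (∑ i ∈ B, ((i : ℝ) / n + ε / (n : ℝ) ^ 2)) ≤ 1 →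
      (∑ i ∈ B, ((i : ℝ) / n + ε / (n : ℝ) ^ 2)) ≤ 1 - (1 - ε) / n := by
  subst hn
  set m := ⌈2 * R⌉₊
  have hm : 2 * R ≤ m := Nat.le_ceil _
  have hδ : 0 < ε / ((m + 1 : ℕ) : ℝ) ^ 2 := by positivity
  rw [Nat.add_sub_cancel]
  refine ⟨?_, fun B hB _ h ↦ ?_⟩
  · have : 0 < (m : ℝ) * (ε / ((m + 1 : ℕ) : ℝ) ^ 2) := mul_pos (by linarith) hδ
    rw [sum_Icc_one_div_succ_add]
    linarith
  · have hcard : #B ≤ m := by simpa using card_le_card hB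
    calc _ ≤ ((m + 1 : ℕ) - 1) / (m + 1 : ℕ) + #B * (ε / ((m + 1 : ℕ) : ℝ) ^ 2) :=
          sum_div_add_le_of_le_one (by omega) hδ h
      _ ≤ ((m + 1 : ℕ) - 1) / (m + 1 : ℕ) + (m + 1 : ℕ) * (ε / ((m + 1 : ℕ) : ℝ) ^ 2) := by
          gcongr; omega
      _ = 1 - (1 - ε) / (m + 1 : ℕ) := by
          push_cast; field_simp; ring

theorem stmt_14 (R ε : ℝ) (hR : 1 ≤ R) (hε0 : 0 < ε) (hε1 : ε < 1)
    (n : ℕ) (hn : n = ⌈2 * R⌉₊ + 1) :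
    (∑ i ∈ Finset.Icc 1 (n - 1), ((i : ℝ) / n + ε / (n : ℝ) ^ 2)) > R ∧
    ∀ B ⊆ Finset.Icc 1 (n - 1), B.Nonempty →
      (∑ i ∈ B, ((i : ℝ) / n + ε / (n : ℝ) ^ 2)) ≤ 1 →
      (∑ i ∈ B, ((i : ℝ) / n + ε / (n : ℝ) ^ 2)) ≤ 1 - (1 - ε) / n :=
  stmt_14_general R ε hR hε0 n hn
end

section
/- Let f₁, …, f_n be items with sizes in (0,1] and values ≥ 0, sorted in non-increasing density order, and let k satisfy Σ_{i=1}^k s(fᵢ) ≤ 1 < Σ_{i=1}^{k+1} s(fᵢ). Then the optimal knapsack value OPT = max{v(X) : X ⊆ {f₁,…,f_n}, s(X) ≤ 1} satisfies OPT ≤ Σ_{i=1}^k v(fᵢ) + v(f_{k+1}) ≤ 2·max{Σ_{i=1}^k v(fᵢ), v(f_{k+1})}. -/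
/-! The first `k + 1` items `G` fill more than the knapsack, so a feasible `X` has
`s(X \ G) ≤ s(G \ X)`. Every item of `X \ G` has density at most `d = v(f_{k+1}) / s(f_{k+1})` and
every item of `G \ X` density at least `d`, hence `v(X \ G) ≤ d · s(X \ G) ≤ d · s(G \ X) ≤ v(G \ X)`,
i.e. `v(X) ≤ v(G)`. -/

namespace Knapsack

variable {ι : Type*} [DecidableEq ι]

theorem sum_le_sum_of_exchange {X G : Finset ι} {s v : ι → ℝ} {d : ℝ} (hd : 0 ≤ d)
    (hout : ∀ i ∈ X \ G, v i ≤ d * s i) (hin : ∀ i ∈ G \ X, d * s i ≤ v i)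
    (hsize : ∑ i ∈ X, s i ≤ ∑ i ∈ G, s i) :
    ∑ i ∈ X, v i ≤ ∑ i ∈ G, v i := by
  have hsdiff : ∑ i ∈ X \ G, s i ≤ ∑ i ∈ G \ X, s i := by
    have := Finset.sum_sdiff_sub_sum_sdiff (s₁ := X) (s₂ := G) (f := s)
    linarith
  have hexchange : ∑ i ∈ X \ G, v i ≤ ∑ i ∈ G \ X, v i :=
    calc ∑ i ∈ X \ G, v i ≤ d * ∑ i ∈ X \ G, s i := by
          rw [Finset.mul_sum]; exact Finset.sum_le_sum hout
      _ ≤ d * ∑ i ∈ G \ X, s i := mul_le_mul_of_nonneg_left hsdiff hd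
      _ ≤ ∑ i ∈ G \ X, v i := by
          rw [Finset.mul_sum]; exact Finset.sum_le_sum hin
  have := Finset.sum_sdiff_sub_sum_sdiff (s₁ := X) (s₂ := G) (f := v)
  linarith

end Knapsack

theorem add_le_two_mul_max {a b : ℝ} : a + b ≤ 2 * max a b := by
  linarith [le_max_left a b, le_max_right a b]

theorem stmt_19_general (n k : ℕ) (hk : k + 1 ≤ n) (s v : ℕ → ℝ)
    (hs : ∀ i ∈ Finset.Icc 1 n, 0 < s i ∧ s i ≤ 1)
    (hv : ∀ i ∈ Finset.Icc 1 n, 0 ≤ v i)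
    (hsort : ∀ i ∈ Finset.Icc 1 n, ∀ j ∈ Finset.Icc 1 n, i ≤ j → v j / s j ≤ v i / s i)
    (hsum2 : 1 < ∑ i ∈ Finset.Icc 1 (k + 1), s i) :
    (∀ X ⊆ Finset.Icc 1 n, ∑ i ∈ X, s i ≤ 1 →
      ∑ i ∈ X, v i ≤ (∑ i ∈ Finset.Icc 1 k, v i) + v (k + 1)) ∧
    (∑ i ∈ Finset.Icc 1 k, v i) + v (k + 1) ≤
      2 * max (∑ i ∈ Finset.Icc 1 k, v i) (v (k + 1)) := by
  have hk1 : k + 1 ∈ Finset.Icc 1 n := Finset.mem_Icc.mpr ⟨by omega, hk⟩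
  have hGn : Finset.Icc 1 (k + 1) ⊆ Finset.Icc 1 n := Finset.Icc_subset_Icc_right hk
  refine ⟨fun X hX hXs => ?_, add_le_two_mul_max⟩
  rw [← Finset.sum_Icc_succ_top (by omega : 1 ≤ k + 1)]
  refine Knapsack.sum_le_sum_of_exchange (d := v (k + 1) / s (k + 1))
    (div_nonneg (hv _ hk1) (hs _ hk1).1.le) (fun i hi => ?_) (fun i hi => ?_) (by linarith)
  · obtain ⟨hiX, hiG⟩ := Finset.mem_sdiff.mp hi
    have hki : k + 1 ≤ i := by
      have := Finset.mem_Icc.mp (hX hiX)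
      simp only [Finset.mem_Icc, not_and_or, not_le] at hiG
      omega
    exact (div_le_iff₀ (hs _ (hX hiX)).1).mp (hsort _ hk1 _ (hX hiX) hki)
  · have hiG := (Finset.mem_sdiff.mp hi).1
    exact (le_div_iff₀ (hs _ (hGn hiG)).1).mp
      (hsort _ (hGn hiG) _ hk1 (Finset.mem_Icc.mp hiG).2)

theorem stmt_19 (n k : ℕ) (hk : k + 1 ≤ n) (s v : ℕ → ℝ)
    (hs : ∀ i ∈ Finset.Icc 1 n, 0 < s i ∧ s i ≤ 1)
    (hv : ∀ i ∈ Finset.Icc 1 n, 0 ≤ v i)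
    (hsort : ∀ i ∈ Finset.Icc 1 n, ∀ j ∈ Finset.Icc 1 n, i ≤ j → v j / s j ≤ v i / s i)
    (hsum1 : ∑ i ∈ Finset.Icc 1 k, s i ≤ 1)
    (hsum2 : 1 < ∑ i ∈ Finset.Icc 1 (k + 1), s i) :
    (∀ X ⊆ Finset.Icc 1 n, ∑ i ∈ X, s i ≤ 1 →
      ∑ i ∈ X, v i ≤ (∑ i ∈ Finset.Icc 1 k, v i) + v (k + 1)) ∧
    (∑ i ∈ Finset.Icc 1 k, v i) + v (k + 1) ≤
      2 * max (∑ i ∈ Finset.Icc 1 k, v i) (v (k + 1)) :=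
  stmt_19_general n k hk s v hs hv hsort hsum2
end
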